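/- arXiv:2008.09535 — 5 statements merged into one kernel-verified Lean document; each statement's English description precedes it below -/
import Mathlib

section
/- For every n ≥ 1, the map φ sending an antichain α on n sources to the function f_α : Finset (Fin n) → Bool defined by f_α(b) = true if and only if there exists a ∈ α with a ⊆ b is well-defined (each f_α is a parthood distribution) and is a bijection from the set of antichains on n sources onto the set of parthood distributions on n sources; moreover it is order-reflecting in the sense that for all antichains α, β: α ⪯ β (in the Crampton–Loizou order) if and only if for every b ⊆ Fin n, f_β(b) = true implies f_α(b) = true. -/
/-- A parthood distribution on `n` sources. -/
def IsPD (n : ℕ) (f : Finset (Fin n) → Bool) : Prop :=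
  (∀ a b : Finset (Fin n), a ⊆ b → f a = true → f b = true) ∧
  f ∅ = false ∧ f Finset.univ = true

/-- An antichain on `n` sources. -/
def IsAC (n : ℕ) (α : Finset (Finset (Fin n))) : Prop :=
  α.Nonempty ∧ (∀ a ∈ α, a.Nonempty) ∧ ∀ a ∈ α, ∀ b ∈ α, ¬ a ⊂ b

/-- The Crampton–Loizou order on antichains. -/
def CLle (n : ℕ) (α β : Finset (Finset (Fin n))) : Prop :=
  ∀ b ∈ β, ∃ a ∈ α, a ⊆ b

/-- The map sending an antichain to its parthood distribution. -/
def phi (n : ℕ) (α : Finset (Finset (Fin n))) : Finset (Fin n) → Bool :=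
  fun b => decide (∃ a ∈ α, a ⊆ b)

/-! An upward-closed family of finite sets is generated by its minimal members, which exist
below every member because `⊂` is well-founded on finsets; conversely, an antichain is exactly
the set of minimal members of the family it generates. So `phi` and "take the minimal members"
are mutually inverse, and the order statement is the transitivity of `⊆`. -/

variable {n : ℕ}

@[simp]
lemma phi_eq_true {α : Finset (Finset (Fin n))} {b : Finset (Fin n)} :
    phi n α b = true ↔ ∃ a ∈ α, a ⊆ b := by
  simp [phi]

lemma phi_mono (α : Finset (Finset (Fin n))) {a b : Finset (Fin n)} (hab : a ⊆ b)
    (ha : phi n α a = true) : phi n α b = true := by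
  obtain ⟨c, hc, hca⟩ := phi_eq_true.1 ha
  exact phi_eq_true.2 ⟨c, hc, hca.trans hab⟩

lemma isPD_phi {α : Finset (Finset (Fin n))} (hα : IsAC n α) : IsPD n (phi n α) := by
  obtain ⟨⟨a, ha⟩, hne, -⟩ := hα
  refine ⟨fun _ _ ↦ phi_mono α, ?_, phi_eq_true.2 ⟨a, ha, Finset.subset_univ a⟩⟩
  rw [Bool.eq_false_iff, ne_eq, phi_eq_true]
  rintro ⟨c, hc, hc0⟩
  exact (hne c hc).ne_empty (Finset.subset_empty.1 hc0)

lemma mem_iff_minimal_phi {α : Finset (Finset (Fin n))}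
    (hα : ∀ a ∈ α, ∀ b ∈ α, ¬ a ⊂ b) {a : Finset (Fin n)} :
    a ∈ α ↔ Minimal (phi n α · = true) a := by
  refine ⟨fun ha ↦ ⟨phi_eq_true.2 ⟨a, ha, subset_rfl⟩, fun b hb hba ↦ ?_⟩, fun ha ↦ ?_⟩
  · obtain ⟨c, hc, hcb⟩ := phi_eq_true.1 hb
    have hca : c = a := by
      by_contra hne
      exact hα c hc a ha ((hcb.trans hba).ssubset_of_ne hne)
    exact hca ▸ hcb
  · obtain ⟨c, hc, hca⟩ := phi_eq_true.1 ha.prop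
    rwa [ha.eq_of_le (phi_eq_true.2 ⟨c, hc, subset_rfl⟩) hca] at hc

lemma eq_of_phi_eq {α β : Finset (Finset (Fin n))} (hα : ∀ a ∈ α, ∀ b ∈ α, ¬ a ⊂ b)
    (hβ : ∀ a ∈ β, ∀ b ∈ β, ¬ a ⊂ b) (h : phi n α = phi n β) : α = β := by
  ext a
  rw [mem_iff_minimal_phi hα, mem_iff_minimal_phi hβ, h]

open Classical in
noncomputable def minimalSets (f : Finset (Fin n) → Bool) : Finset (Finset (Fin n)) :=
  Finset.univ.filter (Minimal (f · = true))

lemma mem_minimalSets {f : Finset (Fin n) → Bool} {a : Finset (Fin n)} :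
    a ∈ minimalSets f ↔ Minimal (f · = true) a := by
  simp [minimalSets]

lemma phi_minimalSets {f : Finset (Fin n) → Bool}
    (hf : ∀ a b : Finset (Fin n), a ⊆ b → f a = true → f b = true) :
    phi n (minimalSets f) = f := by
  funext b
  rw [Bool.eq_iff_iff, phi_eq_true]
  simp only [mem_minimalSets]
  refine ⟨fun ⟨a, ha, hab⟩ ↦ hf a b hab ha.prop, fun hb ↦ ?_⟩
  obtain ⟨a, hab, ha⟩ := exists_minimal_le_of_wellFoundedLT (f · = true) b hb
  exact ⟨a, ha, hab⟩

lemma isAC_minimalSets {f : Finset (Fin n) → Bool} (hf : IsPD n f) : IsAC n (minimalSets f) := by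
  obtain ⟨-, hempty, huniv⟩ := hf
  refine ⟨?_, fun a ha ↦ ?_, fun a ha b hb hab ↦ ?_⟩
  · obtain ⟨a, -, ha⟩ := exists_minimal_le_of_wellFoundedLT (f · = true) _ huniv
    exact ⟨a, mem_minimalSets.2 ha⟩
  · rw [Finset.nonempty_iff_ne_empty]
    rintro rfl
    simp [(mem_minimalSets.1 ha).prop] at hempty
  · exact (mem_minimalSets.1 hb).not_lt (mem_minimalSets.1 ha).prop hab

lemma cLle_iff_phi_le {α β : Finset (Finset (Fin n))} :
    CLle n α β ↔ ∀ b : Finset (Fin n), phi n β b = true → phi n α b = true := by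
  refine ⟨fun h b hb ↦ ?_, fun h b hb ↦ phi_eq_true.1 (h b (phi_eq_true.2 ⟨b, hb, subset_rfl⟩))⟩
  obtain ⟨b', hb', hb'b⟩ := phi_eq_true.1 hb
  obtain ⟨a, ha, hab'⟩ := h b' hb'
  exact phi_eq_true.2 ⟨a, ha, hab'.trans hb'b⟩

theorem antichains_parthood_iso_general (n : ℕ) :
    (∀ α : Finset (Finset (Fin n)), IsAC n α → IsPD n (phi n α)) ∧
    (∀ α β : Finset (Finset (Fin n)), IsAC n α → IsAC n β →
      phi n α = phi n β → α = β) ∧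
    (∀ f : Finset (Fin n) → Bool, IsPD n f →
      ∃ α : Finset (Finset (Fin n)), IsAC n α ∧ phi n α = f) ∧
    (∀ α β : Finset (Finset (Fin n)), IsAC n α → IsAC n β →
      (CLle n α β ↔ ∀ b : Finset (Fin n), phi n β b = true → phi n α b = true)) :=
  ⟨fun _ ↦ isPD_phi,
    fun _ _ hα hβ ↦ eq_of_phi_eq hα.2.2 hβ.2.2,
    fun _ hf ↦ ⟨_, isAC_minimalSets hf, phi_minimalSets hf.1⟩,
    fun _ _ _ _ ↦ cLle_iff_phi_le⟩

theorem antichains_parthood_iso (n : ℕ) (hn : 1 ≤ n) :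
    (∀ α : Finset (Finset (Fin n)), IsAC n α → IsPD n (phi n α)) ∧
    (∀ α β : Finset (Finset (Fin n)), IsAC n α → IsAC n β →
      phi n α = phi n β → α = β) ∧
    (∀ f : Finset (Fin n) → Bool, IsPD n f →
      ∃ α : Finset (Finset (Fin n)), IsAC n α ∧ phi n α = f) ∧
    (∀ α β : Finset (Finset (Fin n)), IsAC n α → IsAC n β →
      (CLle n α β ↔ ∀ b : Finset (Fin n), phi n β b = true → phi n α b = true)) :=
  antichains_parthood_iso_general n
end

section
/- For every n ≥ 1 and all antichains α, β on n sources: α ⪯ β in the Crampton–Loizou order if and only if for every valuation V : Fin n → Bool, (there exists b ∈ β such that V i = true for all i ∈ b) implies (there exists a ∈ α such that V i = true for all i ∈ a). In other words, the Crampton–Loizou order on antichains coincides with the relation of logical implication between the corresponding disjunctions of conjunctions of propositional variables, read semantically over all valuations. -/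
/-- The converse direction tests `α` against the characteristic valuation of each `b ∈ β`. -/
theorem forall_exists_subset_iff_forall_valuation {ι : Type*} (α β : Finset (Finset ι)) :
    (∀ b ∈ β, ∃ a ∈ α, a ⊆ b) ↔
      ∀ V : ι → Bool, (∃ b ∈ β, ∀ i ∈ b, V i = true) → (∃ a ∈ α, ∀ i ∈ a, V i = true) := by
  classical
  constructor
  · rintro h V ⟨b, hb, hV⟩
    obtain ⟨a, ha, hab⟩ := h b hb
    exact ⟨a, ha, fun i hi => hV i (hab hi)⟩
  · intro h b hb
    obtain ⟨a, ha, hV⟩ := h (fun i => decide (i ∈ b)) ⟨b, hb, fun i hi => decide_eq_true hi⟩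
    exact ⟨a, ha, fun i hi => of_decide_eq_true (hV i hi)⟩

theorem CL_order_iff_logical_implication_general (n : ℕ)
    (α β : Finset (Finset (Fin n))) :
    CLle n α β ↔
      ∀ V : Fin n → Bool,
        (∃ b ∈ β, ∀ i ∈ b, V i = true) → (∃ a ∈ α, ∀ i ∈ a, V i = true) :=
  forall_exists_subset_iff_forall_valuation α β

theorem CL_order_iff_logical_implication (n : ℕ) (hn : 1 ≤ n)
    (α β : Finset (Finset (Fin n))) (hα : IsAC n α) (hβ : IsAC n β) :
    CLle n α β ↔
      ∀ V : Fin n → Bool,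
        (∃ b ∈ β, ∀ i ∈ b, V i = true) → (∃ a ∈ α, ∀ i ∈ a, V i = true) :=
  CL_order_iff_logical_implication_general n α β
end

section
/- For every n ≥ 1 and every nonempty finite tuple (a_1, …, a_m) of nonempty subsets of Fin n, there exists a unique antichain α on n sources such that for every parthood distribution f on n sources: (f a_k = true for all k = 1, …, m) if and only if (f a = true for all a ∈ α). In particular, the redundancy condition determined by any tuple of collections of sources is invariant under permutation and repetition of the collections and under removal of any collection that is a proper superset of another, and every such condition coincides with the condition of a unique antichain. -/
/-!
The collections `a k` may be replaced by the minimal ones among them: a monotone `f` holds on all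
of them iff it holds on the minimal ones, and the minimal ones form an antichain. For uniqueness,
the indicator of the upper closure of an antichain `γ` is itself a parthood distribution, so two
antichains inducing the same condition have the same upper closure; an antichain is recovered from
its upper closure as the set of its minimal elements.
-/

theorem IsAntichain.eq_of_upperClosure_eq {α : Type*} [PartialOrder α] {s t : Set α}
    (hs : IsAntichain (· ≤ ·) s) (ht : IsAntichain (· ≤ ·) t)
    (h : upperClosure s = upperClosure t) : s = t := by
  ext x
  rw [← hs.minimal_mem_upperClosure_iff_mem, ← ht.minimal_mem_upperClosure_iff_mem, h]

theorem forall_minimal_imp_iff {α : Type*} [Preorder α] [WellFoundedLT α] {P Q : α → Prop}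
    (hQ : ∀ ⦃a b⦄, a ≤ b → Q a → Q b) :
    (∀ a, Minimal P a → Q a) ↔ ∀ a, P a → Q a := by
  refine ⟨fun h a ha => ?_, fun h a ha => h a ha.prop⟩
  obtain ⟨b, hba, hb⟩ := exists_minimal_le_of_wellFoundedLT P a ha
  exact hQ hba (h b hb)

section

variable {n : ℕ}

theorem IsAC.isAntichain {α : Finset (Finset (Fin n))} (h : IsAC n α) :
    IsAntichain (· ≤ ·) (α : Set (Finset (Fin n))) :=
  isAntichain_iff_forall_not_lt.2 fun a ha b hb => h.2.2 a ha b hb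

theorem isPD_exists_subset {γ : Finset (Finset (Fin n))} (hγ : γ.Nonempty)
    (hpos : ∀ c ∈ γ, c.Nonempty) : IsPD n fun s => decide (∃ c ∈ γ, c ⊆ s) := by
  refine ⟨fun s t hst => ?_, ?_, ?_⟩
  · simp only [decide_eq_true_eq]
    exact fun ⟨c, hc, hcs⟩ => ⟨c, hc, hcs.trans hst⟩
  · simp only [Finset.subset_empty, decide_eq_false_iff_not, not_exists, not_and]
    exact fun c hc => (hpos c hc).ne_empty
  · obtain ⟨c, hc⟩ := hγ
    exact decide_eq_true ⟨c, hc, c.subset_univ⟩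

theorem subset_upperClosure_of_isPD_imp {β γ : Finset (Finset (Fin n))} (hγ : γ.Nonempty)
    (hpos : ∀ c ∈ γ, c.Nonempty)
    (h : ∀ f, IsPD n f → (∀ c ∈ γ, f c = true) → ∀ b ∈ β, f b = true) :
    (β : Set (Finset (Fin n))) ⊆ upperClosure (γ : Set (Finset (Fin n))) := fun b hb => by
  have := h _ (isPD_exists_subset hγ hpos) (fun c hc => decide_eq_true ⟨c, hc, subset_rfl⟩) b hb
  simpa [mem_upperClosure] using this

theorem IsAC.eq_of_forall_isPD_iff {β γ : Finset (Finset (Fin n))} (hβ : IsAC n β)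
    (hγ : IsAC n γ) (h : ∀ f, IsPD n f → ((∀ b ∈ β, f b = true) ↔ ∀ c ∈ γ, f c = true)) :
    β = γ := by
  have hβγ := subset_upperClosure_of_isPD_imp hγ.1 hγ.2.1 fun f hf => (h f hf).2
  have hγβ := subset_upperClosure_of_isPD_imp hβ.1 hβ.2.1 fun f hf => (h f hf).1
  refine Finset.coe_injective (hβ.isAntichain.eq_of_upperClosure_eq hγ.isAntichain ?_)
  exact SetLike.coe_injective <| (upperClosure_min hβγ (UpperSet.upper _)).antisymm
    (upperClosure_min hγβ (UpperSet.upper _))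

open Classical in
theorem isAC_filter_minimal {S : Finset (Finset (Fin n))} (hS : S.Nonempty)
    (hpos : ∀ s ∈ S, s.Nonempty) : IsAC n {s ∈ S | Minimal (· ∈ S) s} := by
  simp only [IsAC, Finset.mem_filter]
  refine ⟨?_, fun s hs => hpos s hs.1, fun s hs t ht => ht.2.not_lt hs.1⟩
  obtain ⟨s, hs⟩ := hS
  obtain ⟨t, -, ht⟩ := exists_minimal_le_of_wellFoundedLT (· ∈ S) s hs
  exact ⟨t, Finset.mem_filter.2 ⟨ht.prop, ht⟩⟩

open Classical in
theorem IsPD.forall_mem_iff_forall_minimal {f : Finset (Fin n) → Bool} (hf : IsPD n f)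
    (S : Finset (Finset (Fin n))) :
    (∀ s ∈ S, f s = true) ↔ ∀ s ∈ {s ∈ S | Minimal (· ∈ S) s}, f s = true := by
  simp only [Finset.mem_filter, and_imp]
  exact (forall_minimal_imp_iff (P := (· ∈ S)) hf.1).symm.trans
    ⟨fun h s _ hs => h s hs, fun h s hs => h s hs.prop hs⟩

end

theorem redundancy_condition_reduces_to_unique_antichain_general (n : ℕ)
    (m : ℕ) (hm : 1 ≤ m) (a : Fin m → Finset (Fin n)) (ha : ∀ k, (a k).Nonempty) :
    ∃! α : Finset (Finset (Fin n)), IsAC n α ∧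
      ∀ f : Finset (Fin n) → Bool, IsPD n f →
        ((∀ k : Fin m, f (a k) = true) ↔ ∀ b ∈ α, f b = true) := by
  classical
  set S := Finset.univ.image a
  have hS : S.Nonempty := Finset.univ_nonempty_iff.2 ⟨⟨0, hm⟩⟩ |>.image a
  have hpos : ∀ s ∈ S, s.Nonempty := by simpa [S] using ha
  have hcond : ∀ f, IsPD n f →
      ((∀ k, f (a k) = true) ↔ ∀ s ∈ {s ∈ S | Minimal (· ∈ S) s}, f s = true) := fun f hf => by
    rw [← hf.forall_mem_iff_forall_minimal S]
    simp [S]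
  refine ⟨_, ⟨isAC_filter_minimal hS hpos, hcond⟩, fun β ⟨hβ, hβcond⟩ => ?_⟩
  exact hβ.eq_of_forall_isPD_iff (isAC_filter_minimal hS hpos) fun f hf =>
    (hβcond f hf).symm.trans (hcond f hf)

theorem redundancy_condition_reduces_to_unique_antichain (n : ℕ) (hn : 1 ≤ n)
    (m : ℕ) (hm : 1 ≤ m) (a : Fin m → Finset (Fin n)) (ha : ∀ k, (a k).Nonempty) :
    ∃! α : Finset (Finset (Fin n)), IsAC n α ∧
      ∀ f : Finset (Fin n) → Bool, IsPD n f →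
        ((∀ k : Fin m, f (a k) = true) ↔ ∀ b ∈ α, f b = true) :=
  redundancy_condition_reduces_to_unique_antichain_general n m hm a ha
end

section
/- For n = 3, let f_top : Finset (Fin 3) → Bool be the parthood distribution with f_top a = true iff a = Finset.univ. Then the set of parthood distributions f satisfying f {0} = f {1} = f {2} = false and f {0,1} = f {0,2} = f {1,2} = false equals the set of parthood distributions f satisfying f {0,1} = f {0,2} = f {1,2} = false, and both sets equal the singleton {f_top}. (The strong-synergy parthood conditions associated with the antichains {{1},{2},{3}} and {{1,2},{1,3},{2,3}} coincide, so the strong-synergy system of equations contains two identical rows and cannot determine the information atoms uniquely.) -/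
/-- The parthood distribution on 3 sources that is true exactly on the full set. -/
def fTop : Finset (Fin 3) → Bool := fun a => decide (a = Finset.univ)

/-! The conditions `f {i, j} = false` say that `f` vanishes on every coatom `univ.erase k` of the
subset lattice. Every proper subset lies below a coatom, so by monotonicity `f` vanishes on all of
them, including the singletons, and `f` is forced to be the top distribution. -/

open Finset

namespace IsPD

variable {n : ℕ} {f : Finset (Fin n) → Bool}

theorem eq_false_of_subset (hf : IsPD n f) {a b : Finset (Fin n)} (hab : a ⊆ b)
    (hb : f b = false) : f a = false := by
  cases ha : f a
  · rfl
  · simpa [hb] using hf.1 a b hab ha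

theorem eq_decide_eq_univ_of_erase (hf : IsPD n f) (hcoatom : ∀ i, f (univ.erase i) = false) :
    f = fun a => decide (a = univ) := by
  funext a
  by_cases ha : a = univ
  · simp [ha, hf.2.2]
  · obtain ⟨i, hi⟩ : ∃ i, i ∉ a := by simpa [eq_univ_iff_forall] using ha
    simpa [ha] using hf.eq_false_of_subset (subset_erase.mpr ⟨subset_univ a, hi⟩) (hcoatom i)

end IsPD

theorem isPD_decide_eq_univ {n : ℕ} (hn : 0 < n) : IsPD n fun a => decide (a = univ) := by
  have : Nonempty (Fin n) := ⟨⟨0, hn⟩⟩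
  refine ⟨fun a b hab ha => ?_, by simp [univ_nonempty.ne_empty.symm], by simp⟩
  simp only [decide_eq_true_eq] at ha ⊢
  exact univ_subset_iff.mp (ha ▸ hab)

theorem forall_erase_fin_three (p : Finset (Fin 3) → Prop) (h01 : p {0, 1}) (h02 : p {0, 2})
    (h12 : p {1, 2}) (i : Fin 3) : p (univ.erase i) := by
  fin_cases i
  exacts [h12, h02, h01]

theorem strong_synergy_conditions_coincide :
    ({f : Finset (Fin 3) → Bool | IsPD 3 f ∧
        f {0} = false ∧ f {1} = false ∧ f {2} = false ∧
        f {0, 1} = false ∧ f {0, 2} = false ∧ f {1, 2} = false} =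
      {f : Finset (Fin 3) → Bool | IsPD 3 f ∧
        f {0, 1} = false ∧ f {0, 2} = false ∧ f {1, 2} = false}) ∧
    ({f : Finset (Fin 3) → Bool | IsPD 3 f ∧
        f {0, 1} = false ∧ f {0, 2} = false ∧ f {1, 2} = false} = {fTop}) := by
  refine ⟨Set.ext fun f => ⟨fun ⟨hf, _, _, _, hpairs⟩ => ⟨hf, hpairs⟩, ?_⟩,
    Set.ext fun f => ⟨fun ⟨hf, h01, h02, h12⟩ => ?_, ?_⟩⟩
  · rintro ⟨hf, h01, h02, h12⟩
    exact ⟨hf, hf.eq_false_of_subset (by decide) h01, hf.eq_false_of_subset (by decide) h01,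
      hf.eq_false_of_subset (by decide) h02, h01, h02, h12⟩
  · exact hf.eq_decide_eq_univ_of_erase
      (forall_erase_fin_three (fun a => f a = false) h01 h02 h12)
  · rintro rfl
    exact ⟨isPD_decide_eq_univ (by norm_num), by decide⟩
end

section
/- Let n ≥ 1 and let f, g be parthood distributions on n sources. Then g is a child of f — i.e., (for all b, f b = true implies g b = true) and there is exactly one set made true by g but not by f — if and only if there exists a nonempty set b* ⊆ Fin n such that f b* = false, f c = true for every c with b* ⊊ c ⊆ Fin n, g b* = true, and g b = f b for every b ≠ b*. (Correctness of the child-generating construction: children of f are obtained exactly by switching to true a single false set of f all of whose proper supersets are already true under f.) -/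
section SingleSwitch

variable {α : Type*} {f g : α → Bool}

theorem le_and_existsUnique_switched_iff :
    ((∀ b, f b = true → g b = true) ∧ ∃! b, g b = true ∧ f b = false) ↔
      ∃ b₀, f b₀ = false ∧ g b₀ = true ∧ ∀ b, b ≠ b₀ → g b = f b := by
  constructor
  · rintro ⟨hle, b₀, ⟨hgb₀, hfb₀⟩, huniq⟩
    refine ⟨b₀, hfb₀, hgb₀, fun b hb => ?_⟩
    cases hfb : f b
    · exact Bool.eq_false_iff.2 fun hgb => hb (huniq b ⟨hgb, hfb⟩)
    · exact hle b hfb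
  · rintro ⟨b₀, hfb₀, hgb₀, hrest⟩
    refine ⟨fun b hfb => ?_, b₀, ⟨hgb₀, hfb₀⟩, fun b ⟨hgb, hfb⟩ => ?_⟩
    · obtain rfl | hb := eq_or_ne b b₀
      · exact absurd hfb (by simp [hfb₀])
      · rwa [hrest b hb]
    · by_contra hb
      simp [hrest b hb, hfb] at hgb

theorem apply_eq_true_of_switched_lt [Preorder α]
    (hg : ∀ a b, a ≤ b → g a = true → g b = true) {b₀ : α} (hgb₀ : g b₀ = true)
    (hrest : ∀ b, b ≠ b₀ → g b = f b) {c : α} (hc : b₀ < c) : f c = true :=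
  hrest c hc.ne' ▸ hg b₀ c hc.le hgb₀

end SingleSwitch

theorem child_generating_construction_general (n : ℕ)
    (f g : Finset (Fin n) → Bool) (hg : IsPD n g) :
    ((∀ b : Finset (Fin n), f b = true → g b = true) ∧
      (∃! b : Finset (Fin n), g b = true ∧ f b = false)) ↔
    (∃ bstar : Finset (Fin n), bstar.Nonempty ∧
      f bstar = false ∧
      (∀ c : Finset (Fin n), bstar ⊂ c → f c = true) ∧
      g bstar = true ∧
      (∀ b : Finset (Fin n), b ≠ bstar → g b = f b)) := by
  obtain ⟨hgmono, hgempty, -⟩ := hg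
  rw [le_and_existsUnique_switched_iff]
  constructor
  · rintro ⟨b₀, hfb₀, hgb₀, hrest⟩
    have hne : b₀.Nonempty := Finset.nonempty_iff_ne_empty.2 <| by
      rintro rfl
      simp [hgempty] at hgb₀
    exact ⟨b₀, hne, hfb₀, fun c => apply_eq_true_of_switched_lt hgmono hgb₀ hrest, hgb₀, hrest⟩
  · rintro ⟨b₀, -, hfb₀, -, hgb₀, hrest⟩
    exact ⟨b₀, hfb₀, hgb₀, hrest⟩

theorem child_generating_construction (n : ℕ) (hn : 1 ≤ n)
    (f g : Finset (Fin n) → Bool) (hf : IsPD n f) (hg : IsPD n g) :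
    ((∀ b : Finset (Fin n), f b = true → g b = true) ∧
      (∃! b : Finset (Fin n), g b = true ∧ f b = false)) ↔
    (∃ bstar : Finset (Fin n), bstar.Nonempty ∧
      f bstar = false ∧
      (∀ c : Finset (Fin n), bstar ⊂ c → f c = true) ∧
      g bstar = true ∧
      (∀ b : Finset (Fin n), b ≠ bstar → g b = f b)) :=
  child_generating_construction_general n f g hg
end
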